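/- Let Σ = (X, 𝒟, φ) be a robustly forward complete abstract dynamical system with 0 a robust equilibrium point. If there exists a non-coercive Lyapunov function V for Σ (continuous V : X → [0,∞), V(0) = 0, 0 < V(x) ≤ ψ₂(‖x‖) for x ≠ 0 with ψ₂ ∈ K∞, and Dini derivative V̇_d(x) ≤ −α(‖x‖) for some α ∈ K and all x, d), then there exists β ∈ KL such that ‖φ(t,x,d)‖ ≤ β(‖x‖, t) for all x ∈ X, d ∈ 𝒟, t ≥ 0 (i.e., 0 is uniformly globally asymptotically stable). -/

import Mathlib

open Filter Set

/-- Class `K` comparison functions on `[0,∞)`. -/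
def ClassK (f : ℝ → ℝ) : Prop :=
  ContinuousOn f (Ici 0) ∧ StrictMonoOn f (Ici 0) ∧ f 0 = 0 ∧ ∀ r, 0 ≤ r → 0 ≤ f r

/-- Class `K∞` comparison functions. -/
def ClassKInf (f : ℝ → ℝ) : Prop :=
  ClassK f ∧ ∀ M : ℝ, ∃ r, 0 ≤ r ∧ M < f r

/-- Class `KL` comparison functions. -/
def ClassKL (β : ℝ → ℝ → ℝ) : Prop :=
  (∀ t, 0 ≤ t → ClassK (fun r => β r t)) ∧
  ∀ r, 0 < r → ContinuousOn (β r) (Ici 0) ∧ AntitoneOn (β r) (Ici 0) ∧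
    Tendsto (β r) atTop (nhds 0)

/-- Right-hand lower Dini derivative. -/
noncomputable def dini (f : ℝ → ℝ) (t : ℝ) : ℝ :=
  liminf (fun τ => (f (t + τ) - f t) / τ) (nhdsWithin 0 (Ioi 0))

/-- An abstract forward-complete dynamical system with disturbances. -/
structure DynSys (X : Type*) [NormedAddCommGroup X] (D : Type*) where
  /-- time shift on disturbances -/
  shift : ℝ → D → D
  /-- transition map -/
  phi : ℝ → X → D → X
  identity : ∀ x d, phi 0 x d = x
  cont : ∀ x d, ContinuousOn (fun t => phi t x d) (Ici 0)
  cocycle : ∀ t h x d, 0 ≤ t → 0 ≤ h →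
    phi h (phi t x d) (shift t d) = phi (t + h) x d

/-- Robust forward completeness. -/
def DynSys.RFC {X D : Type*} [NormedAddCommGroup X] (S : DynSys X D) : Prop :=
  ∀ C > (0:ℝ), ∀ τ > (0:ℝ), ∃ B : ℝ, ∀ (x : X) (d : D) (t : ℝ),
    ‖x‖ ≤ C → 0 ≤ t → t ≤ τ → ‖S.phi t x d‖ ≤ B

/-- `0` is an equilibrium point. -/
def DynSys.Equilibrium {X D : Type*} [NormedAddCommGroup X] (S : DynSys X D) : Prop :=
  ∀ (t : ℝ) (d : D), 0 ≤ t → S.phi t 0 d = 0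

/-- `0` is a robust equilibrium point. -/
def DynSys.REP {X D : Type*} [NormedAddCommGroup X] (S : DynSys X D) : Prop :=
  S.Equilibrium ∧ ∀ ε > (0:ℝ), ∀ h > (0:ℝ), ∃ δ > (0:ℝ), ∀ (t : ℝ) (x : X) (d : D),
    0 ≤ t → t ≤ h → ‖x‖ ≤ δ → ‖S.phi t x d‖ ≤ ε

/-!
Along a trajectory, `V` decreases at rate at least `α ‖φ‖` while `0 ≤ V ≤ ψ₂ ‖x‖`; hence a
trajectory starting in the `r`-ball cannot stay outside the `δ`-ball for longer than
`ψ₂ r / α δ`. Combined with continuity of `V` at `0` and the robust equilibrium property, this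
gives uniform global attractivity, and then uniform stability and (with robust forward
completeness) uniform bounds on the reachable norms. The envelope
`ω r t = sup {‖φ s x d‖ : ‖x‖ ≤ r, s ≥ t}` is therefore finite, increasing in `r`, decreasing
in `t`, and tends to `0` as `t → ∞` and as `r → 0`; averaging it over `[t - 1, t]` and over
`[r, 2 r]` and adding `r e^{-t}` gives a `KL` majorant.
-/

open Topology MeasureTheory intervalIntegral

lemma ClassK.pos {f : ℝ → ℝ} (hf : ClassK f) {r : ℝ} (hr : 0 < r) : 0 < f r :=
  hf.2.2.1 ▸ hf.2.1 self_mem_Ici hr.le hr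

lemma tendsto_nhds_zero_of_nonneg_of_eventually_le {ι : Type*} {l : Filter ι} {u : ι → ℝ}
    (hu : ∀ i, 0 ≤ u i) (h : ∀ ε > 0, ∀ᶠ i in l, u i ≤ ε) : Tendsto u l (𝓝 0) :=
  tendsto_order.2 ⟨fun _ ha => Eventually.of_forall fun i => ha.trans_le (hu i),
    fun a ha => (h (a / 2) (half_pos ha)).mono fun _ hi => hi.trans_lt (half_lt_self ha)⟩

lemma dini_eq_liminf_slope (f : ℝ → ℝ) (t : ℝ) :
    dini f t = liminf (slope f t) (𝓝[>] t) := by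
  rw [← show map (t + ·) (𝓝[>] (0 : ℝ)) = 𝓝[>] t by simp, ← liminf_comp]
  refine liminf_congr ?_
  filter_upwards [self_mem_nhdsWithin] with τ (hτ : 0 < τ)
  simp [slope_def_field]

/-- The hypothesis `L < 0` excludes the junk value `0` of an unbounded `liminf`. -/
lemma frequently_slope_lt_of_dini_le {f : ℝ → ℝ} {t L r : ℝ} (hL : L < 0)
    (h : dini f t ≤ L) (hr : L < r) : ∃ᶠ z in 𝓝[>] t, slope f t z < r := by
  rw [dini_eq_liminf_slope] at h
  by_cases hb : (𝓝[>] t).IsCoboundedUnder (· ≥ ·) (slope f t)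
  · exact frequently_lt_of_liminf_lt hb (h.trans_lt hr)
  · rw [Real.liminf_of_not_isCoboundedUnder hb] at h
    exact absurd h hL.not_ge

noncomputable def windowAvg (g : ℝ → ℝ) (t : ℝ) : ℝ := ∫ s in (t - 1)..t, g s

noncomputable def dyadicAvg (f : ℝ → ℝ) (r : ℝ) : ℝ := (∫ ρ in r..2 * r, f ρ) / r

section Averages

variable {f g : ℝ → ℝ}

namespace Antitone

lemma le_windowAvg (hg : Antitone g) (t : ℝ) : g t ≤ windowAvg g t := by
  simpa [windowAvg] using integral_mono_on (sub_le_self t zero_le_one)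
    (intervalIntegrable_const (c := g t)) (hg.intervalIntegrable (μ := volume))
    (fun s hs => hg hs.2)

lemma windowAvg_le (hg : Antitone g) (t : ℝ) : windowAvg g t ≤ g (t - 1) := by
  simpa [windowAvg] using integral_mono_on (sub_le_self t zero_le_one)
    (hg.intervalIntegrable (μ := volume)) (intervalIntegrable_const (c := g (t - 1)))
    (fun s hs => hg hs.1)

lemma windowAvg_antitone (hg : Antitone g) : Antitone (windowAvg g) := by
  intro t t' htt'
  have hshift := integral_comp_add_right (a := t - 1) (b := t) g (t' - t)
  rw [show t - 1 + (t' - t) = t' - 1 by ring, add_sub_cancel] at hshift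
  rw [windowAvg, windowAvg, ← hshift]
  exact integral_mono_on (by linarith)
    (hg.comp_monotone (monotone_id.add_const _)).intervalIntegrable hg.intervalIntegrable
    (fun s _ => hg (by linarith))

lemma abs_windowAvg_sub_le (hg : Antitone g) {M : ℝ} (hM : ∀ s, |g s| ≤ M) (t t' : ℝ) :
    |windowAvg g t - windowAvg g t'| ≤ 2 * M * |t - t'| := by
  have hint : ∀ a b, |∫ s in a..b, g s| ≤ M * |b - a| := fun a b =>
    norm_integral_le_of_norm_le_const fun s _ => (Real.norm_eq_abs _).trans_le (hM s)
  rw [windowAvg, windowAvg, integral_interval_sub_interval_comm hg.intervalIntegrable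
    hg.intervalIntegrable hg.intervalIntegrable]
  calc |(∫ s in (t - 1)..(t' - 1), g s) - ∫ s in t..t', g s|
      ≤ |∫ s in (t - 1)..(t' - 1), g s| + |∫ s in t..t', g s| := abs_sub _ _
    _ ≤ M * |t' - 1 - (t - 1)| + M * |t' - t| := add_le_add (hint _ _) (hint _ _)
    _ = 2 * M * |t - t'| := by rw [sub_sub_sub_cancel_right, abs_sub_comm]; ring

end Antitone

@[simp]
lemma dyadicAvg_zero (f : ℝ → ℝ) : dyadicAvg f 0 = 0 := by simp [dyadicAvg]

lemma dyadicAvg_nonneg (hf : ∀ ρ, 0 ≤ f ρ) {r : ℝ} (hr : 0 ≤ r) : 0 ≤ dyadicAvg f r :=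
  div_nonneg (integral_nonneg (by linarith) fun ρ _ => hf ρ) hr

lemma abs_dyadicAvg_sub_le {r c : ℝ} (hr : 0 < r) (hf : IntervalIntegrable f volume r (2 * r))
    (hg : IntervalIntegrable g volume r (2 * r)) (hfg : ∀ ρ ∈ Icc r (2 * r), |f ρ - g ρ| ≤ c) :
    |dyadicAvg f r - dyadicAvg g r| ≤ c := by
  rw [dyadicAvg, dyadicAvg, div_sub_div_same, ← integral_sub hf hg, abs_div, abs_of_pos hr,
    div_le_iff₀ hr]
  have := norm_integral_le_of_norm_le_const (a := r) (b := 2 * r) (C := c) (f := fun ρ => f ρ - g ρ)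
    fun ρ hρ => hfg ρ (Ioc_subset_Icc_self (by rwa [uIoc_of_le (by linarith)] at hρ))
  rwa [show 2 * r - r = r by ring, abs_of_pos hr] at this

lemma dyadicAvg_eq_integral_comp_mul {r : ℝ} (hr : 0 < r) :
    dyadicAvg f r = ∫ u in (1 : ℝ)..2, f (r * u) := by
  rw [integral_comp_mul_left _ hr.ne', dyadicAvg, mul_one, mul_comm r, smul_eq_mul,
    inv_mul_eq_div]

namespace Monotone

lemma le_dyadicAvg (hf : Monotone f) {r : ℝ} (hr : 0 < r) : f r ≤ dyadicAvg f r := by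
  have key := integral_mono_on (a := r) (b := 2 * r) (μ := volume) (by linarith)
    (intervalIntegrable_const (c := f r)) hf.intervalIntegrable (fun ρ hρ => hf hρ.1)
  rw [intervalIntegral.integral_const, smul_eq_mul, show 2 * r - r = r by ring] at key
  rw [dyadicAvg, le_div_iff₀ hr]
  linarith

lemma dyadicAvg_le (hf : Monotone f) {r : ℝ} (hr : 0 < r) : dyadicAvg f r ≤ f (2 * r) := by
  have key := integral_mono_on (a := r) (b := 2 * r) (μ := volume) (by linarith)
    hf.intervalIntegrable (intervalIntegrable_const (c := f (2 * r))) (fun ρ hρ => hf hρ.2)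
  rw [intervalIntegral.integral_const, smul_eq_mul, show 2 * r - r = r by ring] at key
  rw [dyadicAvg, div_le_iff₀ hr]
  linarith

lemma dyadicAvg_monotoneOn (hf : Monotone f) (hf0 : ∀ ρ, 0 ≤ f ρ) :
    MonotoneOn (dyadicAvg f) (Ici 0) := by
  intro r₁ hr₁ r₂ hr₂ hr
  obtain rfl | hr₁ := (mem_Ici.1 hr₁).eq_or_lt
  · simpa using dyadicAvg_nonneg hf0 hr₂
  rw [dyadicAvg_eq_integral_comp_mul hr₁, dyadicAvg_eq_integral_comp_mul (hr₁.trans_le hr)]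
  exact integral_mono_on one_le_two
    (hf.comp (monotone_mul_left_of_nonneg hr₁.le)).intervalIntegrable
    (hf.comp (monotone_mul_left_of_nonneg (hr₁.le.trans hr))).intervalIntegrable
    fun u hu => hf (mul_le_mul_of_nonneg_right hr (by linarith [hu.1]))

lemma continuousOn_dyadicAvg (hf : Monotone f) (hf0 : ∀ ρ, 0 ≤ f ρ)
    (hlim : Tendsto f (𝓝[>] 0) (𝓝 0)) : ContinuousOn (dyadicAvg f) (Ici 0) := by
  intro r hr
  obtain rfl | hr := (mem_Ici.1 hr).eq_or_lt
  · rw [← continuousWithinAt_Ioi_iff_Ici, ContinuousWithinAt, dyadicAvg_zero]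
    have hdouble : Tendsto (fun r : ℝ => 2 * r) (𝓝[>] 0) (𝓝[>] 0) :=
      tendsto_nhdsWithin_iff.2 ⟨by simpa using
        ((continuous_const_mul (2 : ℝ)).tendsto' 0 0 (mul_zero 2)).mono_left nhdsWithin_le_nhds,
        eventually_nhdsWithin_of_forall fun r (hr : 0 < r) => mem_Ioi.2 (by positivity)⟩
    refine tendsto_of_tendsto_of_tendsto_of_le_of_le' tendsto_const_nhds (hlim.comp hdouble)
      ?_ ?_ <;> filter_upwards [self_mem_nhdsWithin] with r (hr : 0 < r)
    exacts [dyadicAvg_nonneg hf0 hr.le, hf.dyadicAvg_le hr]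
  · have hprim : Continuous fun y => ∫ ρ in (0 : ℝ)..y, f ρ :=
      continuous_primitive (fun _ _ => hf.intervalIntegrable) 0
    have hdiff : dyadicAvg f =
        fun r => ((∫ ρ in (0 : ℝ)..2 * r, f ρ) - ∫ ρ in (0 : ℝ)..r, f ρ) / r :=
      funext fun r => by
        rw [dyadicAvg, integral_interval_sub_left hf.intervalIntegrable hf.intervalIntegrable]
    rw [hdiff]
    exact (((hprim.comp (continuous_const_mul 2)).sub hprim).continuousAt.div continuousAt_id
      hr.ne').continuousWithinAt

end Monotone
end Averages

/-- `r e^{-t}` makes it strictly increasing in `r`; averaging `h` over `s ∈ [t - 1, t]` and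
`ρ ∈ [r, 2r]` makes it continuous in each variable while keeping it above `h`. -/
noncomputable def klMajorant (h : ℝ → ℝ → ℝ) (r t : ℝ) : ℝ :=
  r * Real.exp (-t) + dyadicAvg (fun ρ => windowAvg (h ρ) t) r

structure IsDecayEnvelope (h : ℝ → ℝ → ℝ) : Prop where
  nonneg : ∀ r t, 0 ≤ h r t
  monotone : ∀ t, Monotone (h · t)
  antitone : ∀ r, Antitone (h r)
  le_apply_zero : ∀ r t, h r t ≤ h r 0
  tendsto_nhdsGT_zero : Tendsto (h · 0) (𝓝[>] 0) (𝓝 0)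
  tendsto_atTop : ∀ r, Tendsto (h r) atTop (𝓝 0)

namespace IsDecayEnvelope

variable {h : ℝ → ℝ → ℝ} (hh : IsDecayEnvelope h)
include hh

lemma apply_zero_left_nonpos (t : ℝ) : h 0 t ≤ 0 :=
  (hh.le_apply_zero 0 t).trans <| ge_of_tendsto hh.tendsto_nhdsGT_zero <|
    eventually_nhdsWithin_of_forall fun _ hr => hh.monotone 0 (le_of_lt hr)

lemma windowAvg_nonneg (ρ t : ℝ) : 0 ≤ windowAvg (h ρ) t :=
  (hh.nonneg ρ t).trans ((hh.antitone ρ).le_windowAvg t)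

lemma windowAvg_le (ρ t : ℝ) : windowAvg (h ρ) t ≤ h ρ 0 :=
  ((hh.antitone ρ).windowAvg_le t).trans (hh.le_apply_zero ρ _)

lemma monotone_windowAvg (t : ℝ) : Monotone fun ρ => windowAvg (h ρ) t :=
  fun _ _ hρ => integral_mono_on (sub_le_self t zero_le_one) (hh.antitone _).intervalIntegrable
    (hh.antitone _).intervalIntegrable fun s _ => hh.monotone s hρ

lemma tendsto_windowAvg_nhdsGT_zero (t : ℝ) :
    Tendsto (fun ρ => windowAvg (h ρ) t) (𝓝[>] 0) (𝓝 0) :=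
  tendsto_of_tendsto_of_tendsto_of_le_of_le tendsto_const_nhds hh.tendsto_nhdsGT_zero
    (fun ρ => hh.windowAvg_nonneg ρ t) (fun ρ => hh.windowAvg_le ρ t)

lemma le_klMajorant {r : ℝ} (hr : 0 ≤ r) (t : ℝ) : h r t ≤ klMajorant h r t := by
  obtain rfl | hr := hr.eq_or_lt
  · simpa [klMajorant] using hh.apply_zero_left_nonpos t
  calc h r t ≤ windowAvg (h r) t := (hh.antitone r).le_windowAvg t
    _ ≤ dyadicAvg (fun ρ => windowAvg (h ρ) t) r := (hh.monotone_windowAvg t).le_dyadicAvg hr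
    _ ≤ klMajorant h r t := le_add_of_nonneg_left (by positivity)

lemma classK_klMajorant (t : ℝ) : ClassK (klMajorant h · t) := by
  have hexp : StrictMono fun r : ℝ => r * Real.exp (-t) :=
    strictMono_mul_right_of_pos (Real.exp_pos _)
  have havg := (hh.monotone_windowAvg t).dyadicAvg_monotoneOn (hh.windowAvg_nonneg · t)
  refine ⟨?_, ?_, by simp [klMajorant], fun r hr => ?_⟩
  · exact (continuous_mul_const _).continuousOn.add
      ((hh.monotone_windowAvg t).continuousOn_dyadicAvg (hh.windowAvg_nonneg · t)
        (hh.tendsto_windowAvg_nhdsGT_zero t))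
  · exact fun r₁ hr₁ r₂ hr₂ hr => add_lt_add_of_lt_of_le (hexp hr) (havg hr₁ hr₂ hr.le)
  · exact add_nonneg (by positivity) (dyadicAvg_nonneg (hh.windowAvg_nonneg · t) hr)

lemma continuous_klMajorant {r : ℝ} (hr : 0 < r) : Continuous (klMajorant h r) := by
  have hlip : LipschitzWith (2 * h (2 * r) 0).toNNReal
      fun t => dyadicAvg (fun ρ => windowAvg (h ρ) t) r := by
    refine LipschitzWith.of_dist_le' fun t t' => ?_
    simp only [Real.dist_eq]
    refine abs_dyadicAvg_sub_le hr (hh.monotone_windowAvg t).intervalIntegrable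
      (hh.monotone_windowAvg t').intervalIntegrable fun ρ hρ => ?_
    refine (hh.antitone ρ).abs_windowAvg_sub_le (fun s => ?_) t t'
    rw [abs_of_nonneg (hh.nonneg ρ s)]
    exact (hh.le_apply_zero ρ s).trans (hh.monotone 0 hρ.2)
  exact (continuous_const.mul (Real.continuous_exp.comp continuous_neg)).add hlip.continuous

lemma antitone_klMajorant {r : ℝ} (hr : 0 ≤ r) : Antitone (klMajorant h r) := by
  intro t t' htt'
  refine add_le_add (mul_le_mul_of_nonneg_left (Real.exp_le_exp.2 (neg_le_neg htt')) hr)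
    (div_le_div_of_nonneg_right ?_ hr)
  exact integral_mono_on (by linarith) (hh.monotone_windowAvg t').intervalIntegrable
    (hh.monotone_windowAvg t).intervalIntegrable
    fun ρ _ => (hh.antitone ρ).windowAvg_antitone htt'

lemma tendsto_klMajorant_atTop {r : ℝ} (hr : 0 < r) :
    Tendsto (klMajorant h r) atTop (𝓝 0) := by
  have hexp : Tendsto (fun t => r * Real.exp (-t)) atTop (𝓝 0) := by
    simpa using Real.tendsto_exp_neg_atTop_nhds_zero.const_mul r
  have hupper : Tendsto (fun t => h (2 * r) (t - 1)) atTop (𝓝 0) :=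
    (hh.tendsto_atTop (2 * r)).comp (tendsto_atTop_add_const_right _ (-1) tendsto_id)
  have havg : Tendsto (fun t => dyadicAvg (fun ρ => windowAvg (h ρ) t) r) atTop (𝓝 0) :=
    tendsto_of_tendsto_of_tendsto_of_le_of_le tendsto_const_nhds hupper
      (fun t => dyadicAvg_nonneg (hh.windowAvg_nonneg · t) hr.le)
      fun t => ((hh.monotone_windowAvg t).dyadicAvg_le hr).trans
        ((hh.antitone _).windowAvg_le t)
  rw [← add_zero (0 : ℝ)]
  exact hexp.add havg

lemma classKL_klMajorant : ClassKL (klMajorant h) :=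
  ⟨fun t _ => hh.classK_klMajorant t, fun _ hr => ⟨(hh.continuous_klMajorant hr).continuousOn,
    (hh.antitone_klMajorant hr.le).antitoneOn _, hh.tendsto_klMajorant_atTop hr⟩⟩

end IsDecayEnvelope

namespace DynSys

variable {X D : Type*} [NormedAddCommGroup X] (S : DynSys X D)

def UniformlyStable : Prop :=
  ∀ ε > (0 : ℝ), ∃ δ > (0 : ℝ), ∀ x d t, 0 ≤ t → ‖x‖ ≤ δ → ‖S.phi t x d‖ ≤ ε

def UniformlyBounded : Prop :=
  ∀ r : ℝ, ∃ C, ∀ x d t, 0 ≤ t → ‖x‖ ≤ r → ‖S.phi t x d‖ ≤ C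

def UniformlyAttractive : Prop :=
  ∀ r : ℝ, ∀ ε > (0 : ℝ), ∃ T, ∀ x d t, ‖x‖ ≤ r → T ≤ t → ‖S.phi t x d‖ ≤ ε

lemma phi_add {t τ : ℝ} (ht : 0 ≤ t) (hτ : 0 ≤ τ) (x : X) (d : D) :
    S.phi (t + τ) x d = S.phi τ (S.phi t x d) (S.shift t d) :=
  (S.cocycle t τ x d ht hτ).symm

/-- The `0` is inserted so that the supremum is over a nonempty set. -/
noncomputable def envelope (r t : ℝ) : ℝ :=
  sSup (insert 0 {y | ∃ x d s, ‖x‖ ≤ r ∧ 0 ≤ s ∧ t ≤ s ∧ ‖S.phi s x d‖ = y})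

section Envelope

variable {S}

lemma envelope_le {r t ε : ℝ} (hε : 0 ≤ ε)
    (h : ∀ x d s, ‖x‖ ≤ r → 0 ≤ s → t ≤ s → ‖S.phi s x d‖ ≤ ε) : S.envelope r t ≤ ε :=
  csSup_le (insert_nonempty _ _) <| forall_mem_insert.2
    ⟨hε, by rintro _ ⟨x, d, s, hx, hs, hts, rfl⟩; exact h x d s hx hs hts⟩

lemma norm_phi_le_envelope (hb : S.UniformlyBounded) {x : X} {r s t : ℝ} (d : D)
    (hx : ‖x‖ ≤ r) (hs : 0 ≤ s) (hts : t ≤ s) : ‖S.phi s x d‖ ≤ S.envelope r t := by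
  obtain ⟨C, hC⟩ := hb r
  refine le_csSup ⟨max C 0, forall_mem_insert.2 ⟨le_max_right _ _, ?_⟩⟩
    (mem_insert_of_mem _ ⟨x, d, s, hx, hs, hts, rfl⟩)
  rintro _ ⟨x, d, s, hx, hs, -, rfl⟩
  exact (hC x d s hs hx).trans (le_max_left _ _)

lemma envelope_nonneg (r t : ℝ) : 0 ≤ S.envelope r t := by
  by_cases h : BddAbove (insert 0 {y | ∃ x d s, ‖x‖ ≤ r ∧ 0 ≤ s ∧ t ≤ s ∧ ‖S.phi s x d‖ = y})
  · exact le_csSup h (mem_insert _ _)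
  · exact (Real.sSup_of_not_bddAbove h).ge

lemma isDecayEnvelope_envelope (hs : S.UniformlyStable) (hb : S.UniformlyBounded)
    (ha : S.UniformlyAttractive) : IsDecayEnvelope S.envelope := by
  refine ⟨envelope_nonneg, fun t r₁ r₂ hr => ?_, fun r t₁ t₂ ht => ?_, fun r t => ?_, ?_,
    fun r => ?_⟩
  · exact envelope_le (envelope_nonneg _ _) fun x d s hx hs hts =>
      norm_phi_le_envelope hb d (hx.trans hr) hs hts
  · exact envelope_le (envelope_nonneg _ _) fun x d s hx hs hts =>
      norm_phi_le_envelope hb d hx hs (ht.trans hts)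
  · exact envelope_le (envelope_nonneg _ _) fun x d s hx hs _ => norm_phi_le_envelope hb d hx hs hs
  · refine tendsto_nhds_zero_of_nonneg_of_eventually_le (envelope_nonneg · 0) fun ε hε => ?_
    obtain ⟨δ, hδ, hsδ⟩ := hs ε hε
    filter_upwards [Ioo_mem_nhdsGT hδ] with r hr
    exact envelope_le hε.le fun x d s hx hs _ => hsδ x d s hs (hx.trans hr.2.le)
  · refine tendsto_nhds_zero_of_nonneg_of_eventually_le (envelope_nonneg r) fun ε hε => ?_
    obtain ⟨T, hT⟩ := ha r ε hε
    filter_upwards [eventually_ge_atTop T] with t ht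
    exact envelope_le hε.le fun x d s hx _ hts => hT x d s hx (ht.trans hts)

theorem exists_classKL_bound (hs : S.UniformlyStable) (hb : S.UniformlyBounded)
    (ha : S.UniformlyAttractive) :
    ∃ β : ℝ → ℝ → ℝ, ClassKL β ∧ ∀ x d t, 0 ≤ t → ‖S.phi t x d‖ ≤ β ‖x‖ t := by
  have hh := isDecayEnvelope_envelope hs hb ha
  exact ⟨klMajorant S.envelope, hh.classKL_klMajorant, fun x d t ht =>
    (norm_phi_le_envelope hb d le_rfl ht le_rfl).trans (hh.le_klMajorant (norm_nonneg x) t)⟩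

lemma uniformlyStable_of_REP (hREP : S.REP) (ha : S.UniformlyAttractive) :
    S.UniformlyStable := by
  intro ε hε
  obtain ⟨T, hT⟩ := ha 1 ε hε
  obtain ⟨δ, hδ, hsmall⟩ := hREP.2 ε hε (max T 1) (by positivity)
  refine ⟨min δ 1, by positivity, fun x d t ht hx => ?_⟩
  rcases le_or_gt t (max T 1) with htT | htT
  · exact hsmall t x d ht htT (hx.trans (min_le_left _ _))
  · exact hT x d t (hx.trans (min_le_right _ _)) ((le_max_left _ _).trans htT.le)

lemma uniformlyBounded_of_RFC (hRFC : S.RFC) (ha : S.UniformlyAttractive) :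
    S.UniformlyBounded := by
  intro r
  obtain ⟨T, hT⟩ := ha (max r 1) 1 one_pos
  obtain ⟨B, hB⟩ := hRFC (max r 1) (by positivity) (max T 1) (by positivity)
  refine ⟨max B 1, fun x d t ht hx => ?_⟩
  have hx' := hx.trans (le_max_left r 1)
  rcases le_or_gt t (max T 1) with htT | htT
  · exact (hB x d t hx' ht htT).trans (le_max_left _ _)
  · exact (hT x d t hx' ((le_max_left _ _).trans htT.le)).trans (le_max_right _ _)

end Envelope

structure IsNoncoerciveLyapunov (V : X → ℝ) (ψ₂ α : ℝ → ℝ) : Prop where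
  continuous : Continuous V
  map_zero : V 0 = 0
  pos : ∀ x, x ≠ 0 → 0 < V x
  le : ∀ x, V x ≤ ψ₂ ‖x‖
  classKInf : ClassKInf ψ₂
  classK : ClassK α
  dini_le : ∀ x d, dini (fun t => V (S.phi t x d)) 0 ≤ -α ‖x‖

namespace IsNoncoerciveLyapunov

variable {S} {V : X → ℝ} {ψ₂ α : ℝ → ℝ} (hV : S.IsNoncoerciveLyapunov V ψ₂ α)
include hV

lemma nonneg (x : X) : 0 ≤ V x := by
  rcases eq_or_ne x 0 with rfl | hx
  · exact hV.map_zero.ge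
  · exact (hV.pos x hx).le

lemma dini_le_along {t : ℝ} (ht : 0 ≤ t) (x : X) (d : D) :
    dini (fun s => V (S.phi s x d)) t ≤ -α ‖S.phi t x d‖ := by
  refine le_of_eq_of_le ?_ (hV.dini_le (S.phi t x d) (S.shift t d))
  refine liminf_congr ?_
  filter_upwards [self_mem_nhdsWithin] with τ (hτ : 0 < τ)
  rw [S.phi_add ht hτ.le, zero_add, S.identity]

lemma frequently_slope_lt (heq : S.Equilibrium) {t r : ℝ} (ht : 0 ≤ t) (x : X) (d : D)
    (hr : -α ‖S.phi t x d‖ < r) :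
    ∃ᶠ z in 𝓝[>] t, slope (fun s => V (S.phi s x d)) t z < r := by
  by_cases hy : S.phi t x d = 0
  · -- the trajectory stays at the equilibrium, so all slopes are `0 < r`
    rw [hy, norm_zero, hV.classK.2.2.1, neg_zero] at hr
    refine Eventually.frequently ?_
    filter_upwards [self_mem_nhdsWithin] with z (hz : t < z)
    have hz0 : S.phi z x d = 0 := by
      rw [← add_sub_cancel t z, S.phi_add ht (by linarith), hy, heq _ _ (by linarith)]
    simpa [slope_def_field, hz0, hy, hV.map_zero] using hr
  · have hα : 0 < α ‖S.phi t x d‖ := hV.classK.pos (norm_pos_iff.2 hy)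
    exact frequently_slope_lt_of_dini_le (by linarith) (hV.dini_le_along ht x d) hr

lemma le_sub_mul (heq : S.Equilibrium) (x : X) (d : D) {a b c : ℝ} (ha : 0 ≤ a) (hab : a ≤ b)
    (hc : ∀ s ∈ Icc a b, c ≤ α ‖S.phi s x d‖) :
    V (S.phi b x d) ≤ V (S.phi a x d) - c * (b - a) := by
  have hcont : ContinuousOn (fun s => V (S.phi s x d)) (Icc a b) :=
    hV.continuous.comp_continuousOn ((S.cont x d).mono fun s hs => ha.trans hs.1)
  refine image_le_of_liminf_slope_right_le_deriv_boundary hcont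
    (B := fun s => V (S.phi a x d) - c * (s - a)) (B' := fun _ => -c) (by simp)
    (by fun_prop) (fun s _ => ?_) (fun s hs r hr => ?_) (right_mem_Icc.2 hab)
  · simpa using ((hasDerivWithinAt_id s (Ici s)).sub_const a).const_mul c |>.const_sub _
  · exact hV.frequently_slope_lt heq (ha.trans hs.1) x d
      (by linarith [hc s (Ico_subset_Icc_self hs), show -c < r from hr])

lemma antitoneOn (heq : S.Equilibrium) (x : X) (d : D) :
    AntitoneOn (fun t => V (S.phi t x d)) (Ici 0) := fun a ha b _ hab => by
  simpa using hV.le_sub_mul heq x d (c := 0) ha hab fun s _ => hV.classK.2.2.2 _ (norm_nonneg _)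

lemma exists_norm_lt (heq : S.Equilibrium) (x : X) (d : D) {a b δ : ℝ} (ha : 0 ≤ a)
    (hab : a ≤ b) (hδ : 0 ≤ δ) (hVa : V (S.phi a x d) < α δ * (b - a)) :
    ∃ u ∈ Icc a b, ‖S.phi u x d‖ < δ := by
  by_contra! hfar
  have := hV.le_sub_mul heq x d ha hab fun s hs =>
    hV.classK.2.1.monotoneOn hδ (hδ.trans (hfar s hs)) (hfar s hs)
  linarith [hV.nonneg (S.phi b x d)]

/-- By time `t - 1` the trajectory reaches the sublevel set `V < α δ₁` and stays in it, so it
meets the `δ₁`-ball during `[t - 1, t]`, after which the robust equilibrium property applies. -/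
lemma uniformlyAttractive (hREP : S.REP) : S.UniformlyAttractive := by
  intro r ε hε
  obtain ⟨δ₁, hδ₁, hREPδ₁⟩ := hREP.2 ε hε 1 one_pos
  obtain ⟨δ₂, hδ₂, hVδ₂⟩ := Metric.continuousAt_iff.1 (hV.continuous.continuousAt (x := 0))
    (α δ₁) (hV.classK.pos hδ₁)
  have hθ := hV.classK.pos hδ₂
  refine ⟨ψ₂ r / α δ₂ + 2, fun x d t hx ht => ?_⟩
  have hr : 0 ≤ r := (norm_nonneg x).trans hx
  have ht1 : 0 ≤ t - 1 := by
    linarith [div_nonneg (hV.classKInf.1.2.2.2 r hr) hθ.le]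
  have hψ : V x < α δ₂ * (t - 1) := calc
    V x ≤ ψ₂ r := (hV.le x).trans (hV.classKInf.1.2.1.monotoneOn (norm_nonneg x) hr hx)
    _ < α δ₂ * (ψ₂ r / α δ₂ + 1) := by rw [mul_add, mul_div_cancel₀ _ hθ.ne']; linarith
    _ ≤ α δ₂ * (t - 1) := mul_le_mul_of_nonneg_left (by linarith) hθ.le
  obtain ⟨u, hu, hu_small⟩ := hV.exists_norm_lt hREP.1 x d le_rfl ht1 hδ₂.le
    (by rwa [S.identity, sub_zero])
  have hVt1 : V (S.phi (t - 1) x d) < α δ₁ * (t - (t - 1)) := by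
    rw [sub_sub_cancel, mul_one]
    refine (hV.antitoneOn hREP.1 x d hu.1 (hu.1.trans hu.2) hu.2).trans_lt ?_
    have := hVδ₂ (by rwa [dist_zero_right])
    rw [hV.map_zero, dist_zero_right, Real.norm_eq_abs] at this
    exact (le_abs_self _).trans_lt this
  obtain ⟨w, hw, hw_small⟩ := hV.exists_norm_lt hREP.1 x d ht1 (by linarith) hδ₁.le hVt1
  rw [← add_sub_cancel w t, S.phi_add (ht1.trans hw.1) (by linarith [hw.2])]
  exact hREPδ₁ _ _ _ (by linarith [hw.2]) (by linarith [hw.1]) hw_small.le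

end IsNoncoerciveLyapunov

end DynSys

/-- Non-coercive UGAS Lyapunov theorem: for a robustly forward complete system
with robust equilibrium, a non-coercive Lyapunov function implies UGAS. -/
theorem noncoercive_UGAS_lyapunov_theorem
    {X D : Type*} [NormedAddCommGroup X] (S : DynSys X D)
    (hRFC : S.RFC) (hREP : S.REP)
    (V : X → ℝ) (hVc : Continuous V) (hV0 : V 0 = 0)
    (ψ₂ α : ℝ → ℝ) (hψ₂ : ClassKInf ψ₂) (hα : ClassK α)
    (hpos : ∀ x : X, x ≠ 0 → 0 < V x)
    (hub : ∀ x : X, V x ≤ ψ₂ ‖x‖)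
    (hdec : ∀ (x : X) (d : D), dini (fun t => V (S.phi t x d)) 0 ≤ -α ‖x‖) :
    ∃ β : ℝ → ℝ → ℝ, ClassKL β ∧
      ∀ (x : X) (d : D) (t : ℝ), 0 ≤ t → ‖S.phi t x d‖ ≤ β ‖x‖ t := by
  have hV : S.IsNoncoerciveLyapunov V ψ₂ α := ⟨hVc, hV0, hpos, hub, hψ₂, hα, hdec⟩
  have ha := hV.uniformlyAttractive hREP
  exact S.exists_classKL_bound (S.uniformlyStable_of_REP hREP ha)
    (S.uniformlyBounded_of_RFC hRFC ha) ha
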